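/- Let x*, y* > 0 and let f : [-x*,x*] × [-y*,y*] → ℝ be a function of class C^{h+k}. Suppose that for each fixed x, f(x,y) = O(|y|^k) as y → 0, and for each fixed y, f(x,y) = O(|x|^h) as x → 0, with the implied constants uniform in the frozen variable. Then there exists a constant M > 0 such that |f(x,y)| ≤ M |x|^h |y|^k for all (x,y) ∈ [-x*,x*] × [-y*,y*]. -/

import Mathlib

/-!
Along each horizontal line, `f(·, y) = O(|x|^h)` forces `∂ₓⁱ f(0, y) = 0` for `i < h`: otherwise
the lowest nonvanishing Taylor coefficient would dominate near `0`. Likewise `∂_yʲ f(x, 0) = 0`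
for `j < k`. As partial derivatives commute, `∂ₓⁱ ∂_yᵏ f` vanishes on `{0} × [-y*, y*]` for
`i < h`, so `h` applications of the mean value theorem starting from a bound `B` for
`∂ₓʰ ∂_yᵏ f` give `|∂_yᵏ f(x, y)| ≤ B |x|^h`, and `k` more in `y` give
`|f(x, y)| ≤ B |x|^h |y|^k`.
-/

open Set Filter Topology

def HasDerivChain (n : ℕ) (p : ℕ → ℝ → ℝ) (s : Set ℝ) : Prop :=
  ∀ j < n, ∀ t ∈ s, HasDerivWithinAt (p j) (p (j + 1) t) s t

lemma hasDerivAt_mul_pow_div_factorial (c t : ℝ) (m : ℕ) :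
    HasDerivAt (fun t => c * t ^ (m + 1) / (m + 1).factorial) (c * t ^ m / m.factorial) t := by
  refine (((hasDerivAt_pow (m + 1) t).const_mul c).div_const _).congr_deriv ?_
  rw [Nat.factorial_succ, Nat.add_sub_cancel]
  push_cast
  field_simp

lemma abs_le_mul_pow_succ_of_hasDerivWithinAt {g g' : ℝ → ℝ} {s : Set ℝ} [s.OrdConnected]
    {B : ℝ} {m : ℕ} (hB : 0 ≤ B) (h0 : 0 ∈ s) (hg : ∀ t ∈ s, HasDerivWithinAt g (g' t) s t)
    (hg0 : g 0 = 0) (hg' : ∀ t ∈ s, |g' t| ≤ B * |t| ^ m) (t : ℝ) (ht : t ∈ s) :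
    |g t| ≤ B * |t| ^ (m + 1) := by
  have hsub : uIcc 0 t ⊆ s := OrdConnected.uIcc_subset ‹_› h0 ht
  have hbound : ∀ y ∈ uIcc 0 t, ‖g' y‖ ≤ B * |t| ^ m := fun y hy => by
    have hyt : |y| ≤ |t| := by simpa using abs_sub_left_of_mem_uIcc hy
    exact (hg' y (hsub hy)).trans (by gcongr)
  have := (convex_uIcc (0 : ℝ) t).norm_image_sub_le_of_norm_hasDerivWithin_le
    (fun y hy => (hg y (hsub hy)).mono hsub) hbound left_mem_uIcc right_mem_uIcc
  simpa [hg0, pow_succ, mul_assoc] using this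

namespace HasDerivChain

variable {n : ℕ} {p : ℕ → ℝ → ℝ} {s : Set ℝ}

lemma tail (hp : HasDerivChain (n + 1) p s) : HasDerivChain n (fun j => p (j + 1)) s :=
  fun j hj => hp (j + 1) (by omega)

lemma abs_le_mul_pow_add [s.OrdConnected] (hp : HasDerivChain n p s) (h0 : 0 ∈ s)
    (hzero : ∀ j < n, p j 0 = 0) {B : ℝ} {m : ℕ} (hB : 0 ≤ B)
    (htop : ∀ t ∈ s, |p n t| ≤ B * |t| ^ m) (t : ℝ) (ht : t ∈ s) :
    |p 0 t| ≤ B * |t| ^ (m + n) := by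
  induction n generalizing p t with
  | zero => simpa using htop t ht
  | succ n ih =>
    refine abs_le_mul_pow_succ_of_hasDerivWithinAt hB h0 (hp 0 n.succ_pos) (hzero 0 n.succ_pos)
      (fun t ht => ?_) t ht
    exact ih hp.tail (fun j hj => hzero (j + 1) (by omega)) htop t ht

lemma abs_le_mul_pow [s.OrdConnected] (hp : HasDerivChain n p s) (h0 : 0 ∈ s)
    (hzero : ∀ j < n, p j 0 = 0) {B : ℝ} (hB : 0 ≤ B) (htop : ∀ t ∈ s, |p n t| ≤ B) (t : ℝ)
    (ht : t ∈ s) : |p 0 t| ≤ B * |t| ^ n := by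
  simpa using hp.abs_le_mul_pow_add h0 hzero hB (m := 0) (by simpa using htop) t ht

lemma abs_sub_mul_pow_div_factorial_le {j : ℕ} [s.OrdConnected] (hp : HasDerivChain (j + 1) p s)
    (h0 : 0 ∈ s) (hzero : ∀ i < j, p i 0 = 0) {M : ℝ} (hM : ∀ t ∈ s, |p (j + 1) t| ≤ M) (t : ℝ)
    (ht : t ∈ s) : |p 0 t - p j 0 * t ^ j / j.factorial| ≤ M * |t| ^ (j + 1) := by
  have hM0 : 0 ≤ M := (abs_nonneg _).trans (hM 0 h0)
  set c := p j 0
  -- `q i` is `p i` minus the `i`-th derivative of the Taylor monomial `c * t ^ j / j!`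
  let q : ℕ → ℝ → ℝ := fun i t => p i t - c * t ^ (j - i) / (j - i).factorial
  have hq : HasDerivChain j q s := by
    intro i hi t ht
    have hji : j - i = j - (i + 1) + 1 := by omega
    show HasDerivWithinAt (fun t => p i t - c * t ^ (j - i) / (j - i).factorial) _ s t
    rw [hji]
    exact (hp i (by omega) t ht).sub (hasDerivAt_mul_pow_div_factorial c t _).hasDerivWithinAt
  have hq0 : ∀ i < j, q i 0 = 0 := fun i hi => by
    simp [q, hzero i hi, zero_pow (by omega : j - i ≠ 0)]
  have htop : ∀ t ∈ s, |q j t| ≤ M * |t| ^ (0 + 1) := by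
    simpa [q] using abs_le_mul_pow_succ_of_hasDerivWithinAt (g := fun t => p j t - c) hM0 h0
      (fun t ht => (hp j j.lt_succ_self t ht).sub_const c) (m := 0) (sub_self c) (by simpa using hM)
  rw [add_comm j]
  simpa [q] using hq.abs_le_mul_pow_add h0 hq0 hM0 htop t ht

lemma apply_zero_eq_zero [s.OrdConnected] (hp : HasDerivChain n p s) (h0 : 0 ∈ s)
    (hs : s ∈ 𝓝[>] 0) (hbdd : ∀ j ≤ n, ∃ M, ∀ t ∈ s, |p j t| ≤ M) {C : ℝ}
    (hsmall : ∀ᶠ t in 𝓝[s] 0, |p 0 t| ≤ C * |t| ^ n) : ∀ j < n, p j 0 = 0 := by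
  intro j
  induction j using Nat.strong_induction_on with
  | _ j ih =>
  intro hj
  obtain ⟨M, hM⟩ := hbdd (j + 1) hj
  have htaylor := abs_sub_mul_pow_div_factorial_le (fun i hi => hp i (by omega)) h0
    (fun i hi => ih i hi (by omega)) hM
  have key : ∀ᶠ t in 𝓝[>] 0, |p j 0| / j.factorial ≤ C * t ^ (n - j) + M * t := by
    filter_upwards [nhdsWithin_le_of_mem hs hsmall, hs, self_mem_nhdsWithin]
      with t hsmall_t hts (htpos : 0 < t)
    have hT := htaylor t hts
    rw [abs_of_pos htpos] at hsmall_t hT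
    have htri := abs_sub_abs_le_abs_sub (p j 0 * t ^ j / j.factorial) (p 0 t)
    rw [abs_sub_comm] at htri
    refine le_of_mul_le_mul_right ?_ (pow_pos htpos j)
    calc |p j 0| / j.factorial * t ^ j = |p j 0 * t ^ j / j.factorial| := by
          rw [abs_div, abs_mul, abs_pow, abs_of_pos htpos, Nat.abs_cast]; ring
      _ ≤ C * t ^ n + M * t ^ (j + 1) := by linarith
      _ = (C * t ^ (n - j) + M * t) * t ^ j := by
          rw [add_mul, mul_assoc, ← pow_add, Nat.sub_add_cancel hj.le]; ring
  have hlim : Tendsto (fun t : ℝ => C * t ^ (n - j) + M * t) (𝓝[>] 0) (𝓝 0) := by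
    have hcont : Continuous fun t : ℝ => C * t ^ (n - j) + M * t := by fun_prop
    simpa [zero_pow (by omega : n - j ≠ 0)] using (hcont.tendsto 0).mono_left nhdsWithin_le_nhds
  have hc := ge_of_tendsto hlim key
  rw [div_le_iff₀ (by positivity), zero_mul] at hc
  exact abs_nonpos_iff.1 hc

lemma eq_zero_of_forall_eq_zero (hp : HasDerivChain n p s) (hs : UniqueDiffOn ℝ s)
    (h : ∀ t ∈ s, p 0 t = 0) : ∀ t ∈ s, p n t = 0 := by
  induction n with
  | zero => exact h
  | succ n ih =>
    intro t ht
    have hpn := ih fun j hj => hp j (by omega)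
    have hd : HasDerivWithinAt (fun _ => (0 : ℝ)) (p (n + 1) t) s t :=
      (hp n n.lt_succ_self t ht).congr (fun y hy => (hpn y hy).symm) (hpn t ht).symm
    exact (hs t ht).eq_deriv _ hd (hasDerivWithinAt_const t s 0)

end HasDerivChain

section DirDerivWithin

variable {E F : Type*} [NormedAddCommGroup E] [NormedSpace ℝ E] [NormedAddCommGroup F]
  [NormedSpace ℝ F] {S : Set E} {g g₁ g₂ : E → F}

/-- The partial derivatives `∂ₓ`, `∂_y` on a rectangle `R` are `dirDerivWithin R (1, 0)` and
`dirDerivWithin R (0, 1)`. -/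
noncomputable def dirDerivWithin (S : Set E) (v : E) (g : E → F) : E → F :=
  fun p => fderivWithin ℝ g S p v

lemma ContDiffOn.dirDerivWithin {m n : WithTop ℕ∞} (hg : ContDiffOn ℝ n g S)
    (hS : UniqueDiffOn ℝ S) (hmn : m + 1 ≤ n) (v : E) :
    ContDiffOn ℝ m (_root_.dirDerivWithin S v g) S :=
  (hg.fderivWithin hS hmn).clm_apply contDiffOn_const

lemma ContDiffOn.iterate_dirDerivWithin {n : ℕ} (hg : ContDiffOn ℝ n g S) (hS : UniqueDiffOn ℝ S)
    (v : E) {i m : ℕ} (him : i + m ≤ n) : ContDiffOn ℝ m ((_root_.dirDerivWithin S v)^[i] g) S := by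
  induction i generalizing m with
  | zero => exact hg.of_le (by exact_mod_cast (by omega : m ≤ n))
  | succ i ih =>
    rw [Function.iterate_succ_apply']
    exact (ih (m := m + 1) (by omega)).dirDerivWithin hS (by norm_cast) v

lemma IsCompact.exists_bound_iterate_dirDerivWithin {n j : ℕ} (hK : IsCompact S)
    (hS : UniqueDiffOn ℝ S) (hg : ContDiffOn ℝ n g S) (v : E) (hj : j ≤ n) :
    ∃ M, ∀ p ∈ S, ‖((dirDerivWithin S v)^[j] g) p‖ ≤ M :=
  hK.exists_bound_of_continuousOn (hg.iterate_dirDerivWithin hS v (m := 0) (by omega)).continuousOn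

lemma Set.EqOn.dirDerivWithin (h : EqOn g₁ g₂ S) (v : E) :
    EqOn (_root_.dirDerivWithin S v g₁) (_root_.dirDerivWithin S v g₂) S := fun p hp => by
  simp only [_root_.dirDerivWithin, fderivWithin_congr h (h hp)]

lemma Set.EqOn.iterate_dirDerivWithin (h : EqOn g₁ g₂ S) (v : E) (i : ℕ) :
    EqOn ((_root_.dirDerivWithin S v)^[i] g₁) ((_root_.dirDerivWithin S v)^[i] g₂) S := by
  induction i generalizing g₁ g₂ with
  | zero => exact h
  | succ i ih => exact ih (h.dirDerivWithin v)

lemma dirDerivWithin_comm (hS : UniqueDiffOn ℝ S) (hSi : S ⊆ closure (interior S)) (v w : E)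
    (hg : ContDiffOn ℝ 2 g S) :
    EqOn (dirDerivWithin S v (dirDerivWithin S w g))
      (dirDerivWithin S w (dirDerivWithin S v g)) S := by
  intro p hp
  have hd : DifferentiableWithinAt ℝ (fderivWithin ℝ g S) S p :=
    (hg.fderivWithin hS (m := 1) (by norm_num)).differentiableOn one_ne_zero p hp
  have hsecond : ∀ u₁ u₂, dirDerivWithin S u₁ (dirDerivWithin S u₂ g) p
      = fderivWithin ℝ (fderivWithin ℝ g S) S p u₁ u₂ := fun u₁ u₂ => by
    change fderivWithin ℝ (fun q => fderivWithin ℝ g S q u₂) S p u₁ = _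
    rw [fderivWithin_clm_apply (hS p hp) hd (differentiableWithinAt_const u₂)]
    simp
  rw [hsecond, hsecond]
  exact (hg.contDiffWithinAt hp).isSymmSndFDerivWithinAt (by simp) hS (hSi hp) hp v w

lemma dirDerivWithin_iterate_comm (hS : UniqueDiffOn ℝ S) (hSi : S ⊆ closure (interior S))
    (v w : E) {k : ℕ} (hg : ContDiffOn ℝ (k + 1 : ℕ) g S) :
    EqOn (dirDerivWithin S v ((dirDerivWithin S w)^[k] g))
      ((dirDerivWithin S w)^[k] (dirDerivWithin S v g)) S := by
  induction k generalizing g with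
  | zero => exact fun _ _ => rfl
  | succ k ih =>
    intro p hp
    rw [Function.iterate_succ_apply, Function.iterate_succ_apply]
    calc _ = ((dirDerivWithin S w)^[k] (dirDerivWithin S v (dirDerivWithin S w g))) p :=
          ih (hg.dirDerivWithin hS (by push_cast; rfl) w) hp
      _ = _ := EqOn.iterate_dirDerivWithin
          (dirDerivWithin_comm hS hSi v w (hg.of_le (by norm_cast; omega))) w k hp

lemma iterate_dirDerivWithin_comm (hS : UniqueDiffOn ℝ S) (hSi : S ⊆ closure (interior S))
    (v w : E) {i k : ℕ} (hg : ContDiffOn ℝ (i + k : ℕ) g S) :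
    EqOn ((dirDerivWithin S v)^[i] ((dirDerivWithin S w)^[k] g))
      ((dirDerivWithin S w)^[k] ((dirDerivWithin S v)^[i] g)) S := by
  induction i generalizing g with
  | zero => exact fun _ _ => rfl
  | succ i ih =>
    intro p hp
    rw [Function.iterate_succ_apply, Function.iterate_succ_apply]
    calc _ = ((dirDerivWithin S v)^[i] ((dirDerivWithin S w)^[k] (dirDerivWithin S v g))) p :=
          EqOn.iterate_dirDerivWithin
            (dirDerivWithin_iterate_comm hS hSi v w (hg.of_le (by norm_cast; omega))) v i hp
      _ = _ := ih (hg.dirDerivWithin hS (by norm_cast; omega) v) hp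

end DirDerivWithin

section Rectangle

variable {A B : Set ℝ} {F : Type*} [NormedAddCommGroup F] [NormedSpace ℝ F] {x y : ℝ}

lemma hasDerivWithinAt_dirDerivWithin_fst {g : ℝ × ℝ → F}
    (hg : DifferentiableWithinAt ℝ g (A ×ˢ B) (x, y)) (hy : y ∈ B) :
    HasDerivWithinAt (fun s => g (s, y))
      (dirDerivWithin (A ×ˢ B) ((1 : ℝ), (0 : ℝ)) g (x, y)) A x :=
  hg.hasFDerivWithinAt.comp_hasDerivWithinAt x
    ((hasDerivAt_id x).prodMk (hasDerivAt_const x y)).hasDerivWithinAt fun _ hs => mk_mem_prod hs hy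

lemma hasDerivWithinAt_dirDerivWithin_snd {g : ℝ × ℝ → F}
    (hg : DifferentiableWithinAt ℝ g (A ×ˢ B) (x, y)) (hx : x ∈ A) :
    HasDerivWithinAt (fun s => g (x, s))
      (dirDerivWithin (A ×ˢ B) ((0 : ℝ), (1 : ℝ)) g (x, y)) B y :=
  hg.hasFDerivWithinAt.comp_hasDerivWithinAt y
    ((hasDerivAt_const y x).prodMk (hasDerivAt_id y)).hasDerivWithinAt fun _ hs => mk_mem_prod hx hs

variable {n : ℕ} {g : ℝ × ℝ → ℝ}

lemma hasDerivChain_fst (hAB : UniqueDiffOn ℝ (A ×ˢ B)) (hg : ContDiffOn ℝ n g (A ×ˢ B))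
    (hy : y ∈ B) :
    HasDerivChain n (fun j s => ((dirDerivWithin (A ×ˢ B) ((1 : ℝ), (0 : ℝ)))^[j] g) (s, y)) A := by
  intro j hj s hs
  simp only [Function.iterate_succ_apply']
  exact hasDerivWithinAt_dirDerivWithin_fst ((hg.iterate_dirDerivWithin hAB _ (m := 1)
    (by omega)).differentiableOn one_ne_zero _ ⟨hs, hy⟩) hy

lemma hasDerivChain_snd (hAB : UniqueDiffOn ℝ (A ×ˢ B)) (hg : ContDiffOn ℝ n g (A ×ˢ B))
    (hx : x ∈ A) :
    HasDerivChain n (fun j s => ((dirDerivWithin (A ×ˢ B) ((0 : ℝ), (1 : ℝ)))^[j] g) (x, s)) B := by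
  intro j hj s hs
  simp only [Function.iterate_succ_apply']
  exact hasDerivWithinAt_dirDerivWithin_snd ((hg.iterate_dirDerivWithin hAB _ (m := 1)
    (by omega)).differentiableOn one_ne_zero _ ⟨hx, hs⟩) hx

end Rectangle

section SymmetricRectangle

variable {a b : ℝ}

lemma uniqueDiffOn_Icc_prod_Icc (ha : 0 < a) (hb : 0 < b) :
    UniqueDiffOn ℝ (Icc (-a) a ×ˢ Icc (-b) b) :=
  (uniqueDiffOn_Icc (by linarith)).prod (uniqueDiffOn_Icc (by linarith))

lemma Icc_prod_Icc_subset_closure_interior (ha : 0 < a) (hb : 0 < b) :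
    Icc (-a) a ×ˢ Icc (-b) b ⊆ closure (interior (Icc (-a) a ×ˢ Icc (-b) b)) := by
  rw [interior_prod_eq, closure_prod_eq, interior_Icc, interior_Icc,
    closure_Ioo (by linarith), closure_Ioo (by linarith)]

variable {g : ℝ × ℝ → ℝ} {n : ℕ} {C δ : ℝ}

lemma iterate_dirDerivWithin_fst_apply_zero (ha : 0 < a) (hb : 0 < b)
    (hg : ContDiffOn ℝ n g (Icc (-a) a ×ˢ Icc (-b) b)) (hδ : 0 < δ)
    (hsmall : ∀ x ∈ Icc (-a) a, ∀ y ∈ Icc (-b) b, |x| ≤ δ → |g (x, y)| ≤ C * |x| ^ n)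
    {y : ℝ} (hy : y ∈ Icc (-b) b) {i : ℕ} (hi : i < n) :
    ((dirDerivWithin (Icc (-a) a ×ˢ Icc (-b) b) ((1 : ℝ), (0 : ℝ)))^[i] g) (0, y) = 0 := by
  have hR := uniqueDiffOn_Icc_prod_Icc ha hb
  refine (hasDerivChain_fst hR hg hy).apply_zero_eq_zero (C := C) ⟨by linarith, ha.le⟩
    (Icc_mem_nhdsGT_of_mem ⟨by linarith, ha⟩) (fun j hj => ?_) ?_ i hi
  · obtain ⟨M, hM⟩ := (isCompact_Icc.prod isCompact_Icc).exists_bound_iterate_dirDerivWithin hR hg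
      _ hj
    exact ⟨M, fun t ht => hM _ ⟨ht, hy⟩⟩
  · have hδ₀ : ∀ᶠ t in 𝓝 (0 : ℝ), |t| ≤ δ :=
      (continuous_abs.tendsto' 0 0 abs_zero).eventually (eventually_le_nhds hδ)
    exact eventually_nhdsWithin_iff.2 (hδ₀.mono fun t htδ ht => hsmall t ht y hy htδ)

lemma iterate_dirDerivWithin_snd_apply_zero (ha : 0 < a) (hb : 0 < b)
    (hg : ContDiffOn ℝ n g (Icc (-a) a ×ˢ Icc (-b) b)) (hδ : 0 < δ)
    (hsmall : ∀ x ∈ Icc (-a) a, ∀ y ∈ Icc (-b) b, |y| ≤ δ → |g (x, y)| ≤ C * |y| ^ n)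
    {x : ℝ} (hx : x ∈ Icc (-a) a) {j : ℕ} (hj : j < n) :
    ((dirDerivWithin (Icc (-a) a ×ˢ Icc (-b) b) ((0 : ℝ), (1 : ℝ)))^[j] g) (x, 0) = 0 := by
  have hR := uniqueDiffOn_Icc_prod_Icc ha hb
  refine (hasDerivChain_snd hR hg hx).apply_zero_eq_zero (C := C) ⟨by linarith, hb.le⟩
    (Icc_mem_nhdsGT_of_mem ⟨by linarith, hb⟩) (fun i hi => ?_) ?_ j hj
  · obtain ⟨M, hM⟩ := (isCompact_Icc.prod isCompact_Icc).exists_bound_iterate_dirDerivWithin hR hg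
      _ hi
    exact ⟨M, fun t ht => hM _ ⟨hx, ht⟩⟩
  · have hδ₀ : ∀ᶠ t in 𝓝 (0 : ℝ), |t| ≤ δ :=
      (continuous_abs.tendsto' 0 0 abs_zero).eventually (eventually_le_nhds hδ)
    exact eventually_nhdsWithin_iff.2 (hδ₀.mono fun t htδ ht => hsmall x hx t ht htδ)

lemma exists_abs_iterate_dirDerivWithin_snd_le {m : ℕ} (ha : 0 < a) (hb : 0 < b)
    (hg : ContDiffOn ℝ (m + n : ℕ) g (Icc (-a) a ×ˢ Icc (-b) b))
    (hvan : ∀ y ∈ Icc (-b) b, ∀ i < m,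
      ((dirDerivWithin (Icc (-a) a ×ˢ Icc (-b) b) ((1 : ℝ), (0 : ℝ)))^[i] g) (0, y) = 0) :
    ∃ B ≥ 0, ∀ x ∈ Icc (-a) a, ∀ y ∈ Icc (-b) b,
      |((dirDerivWithin (Icc (-a) a ×ˢ Icc (-b) b) ((0 : ℝ), (1 : ℝ)))^[n] g) (x, y)|
        ≤ B * |x| ^ m := by
  set R := Icc (-a) a ×ˢ Icc (-b) b
  set D₁ : (ℝ × ℝ → ℝ) → ℝ × ℝ → ℝ := dirDerivWithin R ((1 : ℝ), (0 : ℝ))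
  set D₂ : (ℝ × ℝ → ℝ) → ℝ × ℝ → ℝ := dirDerivWithin R ((0 : ℝ), (1 : ℝ))
  have hR := uniqueDiffOn_Icc_prod_Icc ha hb
  have ha₀ : (0 : ℝ) ∈ Icc (-a) a := ⟨by linarith, ha.le⟩
  have hmixed : ∀ y ∈ Icc (-b) b, ∀ i < m, (D₁^[i] (D₂^[n] g)) (0, y) = 0 := by
    intro y hy i hi
    rw [iterate_dirDerivWithin_comm hR (Icc_prod_Icc_subset_closure_interior ha hb) _ _
      (hg.of_le (by norm_cast; omega)) ⟨ha₀, hy⟩]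
    exact (hasDerivChain_snd hR (hg.iterate_dirDerivWithin hR _ (i := i) (m := n) (by omega))
      ha₀).eq_zero_of_forall_eq_zero (uniqueDiffOn_Icc (by linarith))
      (fun t ht => hvan t ht i hi) y hy
  have hG : ContDiffOn ℝ m (D₂^[n] g) R := hg.iterate_dirDerivWithin hR _ (by omega)
  obtain ⟨B, hB⟩ := (isCompact_Icc.prod isCompact_Icc).exists_bound_iterate_dirDerivWithin hR hG
    ((1 : ℝ), (0 : ℝ)) le_rfl
  have hB₀ : 0 ≤ B := (norm_nonneg _).trans (hB (0, 0) ⟨ha₀, by constructor <;> linarith⟩)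
  exact ⟨B, hB₀, fun x hx y hy => (hasDerivChain_fst hR hG hy).abs_le_mul_pow ha₀ (hmixed y hy)
    hB₀ (fun t ht => hB _ ⟨ht, hy⟩) x hx⟩

end SymmetricRectangle

theorem stmt0_general (h k : ℕ) (xs ys : ℝ) (hxs : 0 < xs) (hys : 0 < ys)
    (f : ℝ × ℝ → ℝ)
    (hf : ContDiffOn ℝ (h + k) f (Icc (-xs) xs ×ˢ Icc (-ys) ys))
    (C : ℝ) (δ : ℝ) (hδ : 0 < δ)
    (hy : ∀ x ∈ Icc (-xs) xs, ∀ y ∈ Icc (-ys) ys, |y| ≤ δ → |f (x, y)| ≤ C * |y| ^ k)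
    (hx : ∀ x ∈ Icc (-xs) xs, ∀ y ∈ Icc (-ys) ys, |x| ≤ δ → |f (x, y)| ≤ C * |x| ^ h) :
    ∃ M > 0, ∀ x ∈ Icc (-xs) xs, ∀ y ∈ Icc (-ys) ys,
      |f (x, y)| ≤ M * |x| ^ h * |y| ^ k := by
  have hf' : ContDiffOn ℝ (h + k : ℕ) f (Icc (-xs) xs ×ˢ Icc (-ys) ys) := by exact_mod_cast hf
  obtain ⟨B, hB₀, hB⟩ := exists_abs_iterate_dirDerivWithin_snd_le hxs hys hf'
    fun y hy i hi => iterate_dirDerivWithin_fst_apply_zero hxs hys (hf'.of_le (by norm_cast; omega))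
      hδ hx hy hi
  refine ⟨B + 1, by linarith, fun x hx' y hy' => ?_⟩
  calc |f (x, y)| ≤ B * |x| ^ h * |y| ^ k :=
        (hasDerivChain_snd (uniqueDiffOn_Icc_prod_Icc hxs hys) (hf'.of_le (by norm_cast; omega))
          hx').abs_le_mul_pow ⟨by linarith, hys.le⟩
          (fun j hj => iterate_dirDerivWithin_snd_apply_zero hxs hys
            (hf'.of_le (by norm_cast; omega)) hδ hy hx' hj)
          (by positivity) (fun t ht => hB x hx' t ht) y hy'
    _ ≤ (B + 1) * |x| ^ h * |y| ^ k := by gcongr; linarith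

theorem stmt0 (h k : ℕ) (hh : 0 < h) (hk : 0 < k) (xs ys : ℝ) (hxs : 0 < xs) (hys : 0 < ys)
    (f : ℝ × ℝ → ℝ)
    (hf : ContDiffOn ℝ (h + k) f (Icc (-xs) xs ×ˢ Icc (-ys) ys))
    (C : ℝ) (hC : 0 < C) (δ : ℝ) (hδ : 0 < δ)
    (hy : ∀ x ∈ Icc (-xs) xs, ∀ y ∈ Icc (-ys) ys, |y| ≤ δ → |f (x, y)| ≤ C * |y| ^ k)
    (hx : ∀ x ∈ Icc (-xs) xs, ∀ y ∈ Icc (-ys) ys, |x| ≤ δ → |f (x, y)| ≤ C * |x| ^ h) :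
    ∃ M > 0, ∀ x ∈ Icc (-xs) xs, ∀ y ∈ Icc (-ys) ys,
      |f (x, y)| ≤ M * |x| ^ h * |y| ^ k :=
  stmt0_general h k xs ys hxs hys f hf C δ hδ hy hx
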